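/- arXiv:2603.23166 — 6 statements merged into one kernel-verified Lean document; each statement's English description precedes it below -/
import Mathlib

section
/- Let p > 2 be a prime with binary expansion p = ∑_{n=0}^{t-1} s_n 2^n where s_0 = s_{t-1} = 1, and let q = ∑_{n=0}^{t-1} s_{t-1-n} 2^n be its binary reverse. Let T be a positive integer with ord_q(2) ∣ T and ord_p(2) ∤ T. Then gcd(2^T - 1, p) = 1 and gcd(2^T - 1, 2^(T-t) q) = q; consequently, for the T-periodic sequence S with one period (s_0,…,s_{t-1},0,…,0), the 2-adic complexity λ(S) = log₂(2^T - 1) equals the symmetric 2-adic complexity plus log₂(q). -/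
/-!
`ord_n(2) ∣ T` says exactly that `n ∣ 2^T - 1`; so `q` divides `2^T - 1` and the prime `p` does not.
Since `2^T - 1` is odd, the factor `2^(T-t)` does not contribute to `gcd(2^T - 1, 2^(T-t) q) = q`,
and the complexities are then related by `log₂((2^T - 1)/q) + log₂ q = log₂(2^T - 1)`.
-/

theorem ZMod.orderOf_natCast_dvd_iff_dvd_pow_sub_one {n a : ℕ} (ha : 0 < a) (T : ℕ) :
    orderOf (a : ZMod n) ∣ T ↔ n ∣ a ^ T - 1 := by
  rw [orderOf_dvd_iff_pow_eq_one, ← Nat.cast_pow, ← Nat.cast_one, ZMod.natCast_eq_natCast_iff,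
    Nat.ModEq.comm, Nat.modEq_iff_dvd' (Nat.one_le_pow _ _ ha)]

theorem Nat.coprime_two_pow_two_pow_sub_one (k : ℕ) {T : ℕ} (hT : T ≠ 0) :
    Nat.Coprime (2 ^ k) (2 ^ T - 1) := by
  refine Nat.Coprime.pow_left k (Nat.coprime_two_left.mpr ?_)
  exact Nat.Even.sub_odd Nat.one_le_two_pow (Nat.even_pow.mpr ⟨even_two, hT⟩) odd_one

theorem Real.min_logb_div_add_logb {b x y : ℝ} (hb : 1 < b) (hx : 0 < x) (hy : 1 ≤ y) :
    min (logb b x) (logb b (x / y)) + logb b y = logb b x := by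
  have hlogy : 0 ≤ logb b y := logb_nonneg hb hy
  rw [logb_div hx.ne' (by positivity), min_eq_right (by linarith)]
  ring

theorem stmt1_general (t T : ℕ)
    (p q : ℕ)
    (hp_prime : Nat.Prime p)
    (hordq : orderOf (2 : ZMod q) ∣ T)
    (hordp : ¬ orderOf (2 : ZMod p) ∣ T) :
    Nat.gcd (2 ^ T - 1) p = 1 ∧
    Nat.gcd (2 ^ T - 1) (2 ^ (T - t) * q) = q ∧
    Real.logb 2 (((2 ^ T - 1 : ℕ) : ℝ) / (Nat.gcd (2 ^ T - 1) p : ℝ))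
      = Real.logb 2 ((2 ^ T - 1 : ℕ) : ℝ) ∧
    Real.logb 2 (((2 ^ T - 1 : ℕ) : ℝ) / (Nat.gcd (2 ^ T - 1) p : ℝ))
      = min (Real.logb 2 (((2 ^ T - 1 : ℕ) : ℝ) / (Nat.gcd (2 ^ T - 1) p : ℝ)))
            (Real.logb 2 (((2 ^ T - 1 : ℕ) : ℝ) / (Nat.gcd (2 ^ T - 1) (2 ^ (T - t) * q) : ℝ)))
        + Real.logb 2 (q : ℝ) := by
  have hT : T ≠ 0 := by rintro rfl; exact hordp (dvd_zero _)
  have hq : q ∣ 2 ^ T - 1 :=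
    (ZMod.orderOf_natCast_dvd_iff_dvd_pow_sub_one two_pos T).mp (mod_cast hordq)
  have hp : ¬ p ∣ 2 ^ T - 1 :=
    mt (ZMod.orderOf_natCast_dvd_iff_dvd_pow_sub_one two_pos T).mpr (mod_cast hordp)
  have hgcd_p : Nat.gcd (2 ^ T - 1) p = 1 :=
    ((hp_prime.coprime_iff_not_dvd).mpr hp).symm
  have hgcd_q : Nat.gcd (2 ^ T - 1) (2 ^ (T - t) * q) = q := by
    rw [(Nat.coprime_two_pow_two_pow_sub_one _ hT).gcd_mul_left_cancel_right, Nat.gcd_eq_right hq]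
  have hN : 0 < 2 ^ T - 1 := Nat.sub_pos_of_lt (Nat.one_lt_two_pow hT)
  have hq1 : (1 : ℝ) ≤ q := mod_cast Nat.pos_of_dvd_of_pos hq hN
  refine ⟨hgcd_p, hgcd_q, by simp [hgcd_p], ?_⟩
  rw [hgcd_p, hgcd_q, Nat.cast_one, div_one,
    Real.min_logb_div_add_logb one_lt_two (mod_cast hN) hq1]

/-- Theorem 1 of the paper: sequences derived from non-palindromic primes. -/
theorem stmt1 (t T : ℕ) (s : ℕ → ℕ)
    (hbits : ∀ n < t, s n ≤ 1) (hs0 : s 0 = 1) (hst : s (t - 1) = 1)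
    (p q : ℕ)
    (hp_def : p = ∑ n ∈ Finset.range t, s n * 2 ^ n)
    (hq_def : q = ∑ n ∈ Finset.range t, s (t - 1 - n) * 2 ^ n)
    (hp_prime : Nat.Prime p) (hp2 : 2 < p) (hnonpal : p ≠ q)
    (hT : 0 < T) (htT : t ≤ T)
    (hordq : orderOf (2 : ZMod q) ∣ T)
    (hordp : ¬ orderOf (2 : ZMod p) ∣ T) :
    Nat.gcd (2 ^ T - 1) p = 1 ∧
    Nat.gcd (2 ^ T - 1) (2 ^ (T - t) * q) = q ∧
    Real.logb 2 (((2 ^ T - 1 : ℕ) : ℝ) / (Nat.gcd (2 ^ T - 1) p : ℝ))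
      = Real.logb 2 ((2 ^ T - 1 : ℕ) : ℝ) ∧
    Real.logb 2 (((2 ^ T - 1 : ℕ) : ℝ) / (Nat.gcd (2 ^ T - 1) p : ℝ))
      = min (Real.logb 2 (((2 ^ T - 1 : ℕ) : ℝ) / (Nat.gcd (2 ^ T - 1) p : ℝ)))
            (Real.logb 2 (((2 ^ T - 1 : ℕ) : ℝ) / (Nat.gcd (2 ^ T - 1) (2 ^ (T - t) * q) : ℝ)))
        + Real.logb 2 (q : ℝ) :=
  stmt1_general t T p q hp_prime hordq hordp
end

section
/- Let k ≥ (N+1)/2 and consider S_N = (s_0,…,s_{N-1}) with s_n = 1 for n < k, s_k = 0, and arbitrary remaining bits. Then Λ(S_N) ≥ 2^{k-1} + 1. -/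
/-!
Reduced modulo `2^(k+1)`, the sequence `1 … 1 0` of length `k + 1` is the integer `2^k - 1`, so
any admissible pair has `q * (2^k - 1) ≡ f`, i.e. `q + f ≡ 2^k (mod 2^(k+1))` because `q` is odd.
If `|q|, |f| ≤ 2^(k-1)` this forces `q = f = 2^(k-1)`, which is even as soon as `k ≥ 2`.
-/

open Finset

/-- The `N`th rational complexity of a finite binary sequence `(s 0, …, s (N-1))`:
`min { max(q,|f|) : q·∑ sₙ2ⁿ ≡ f (mod 2^N), q > 0 odd }`. -/
noncomputable def ratComplexity (N : ℕ) (s : ℕ → ℕ) : ℕ :=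
  sInf {m : ℕ | ∃ q f : ℤ, 0 < q ∧ Odd q ∧
    (2 ^ N : ℤ) ∣ q * (∑ n ∈ Finset.range N, (s n : ℤ) * 2 ^ n) - f ∧
    (m : ℤ) = max q |f|}

theorem le_ratComplexity {N : ℕ} {s : ℕ → ℕ} {B : ℕ}
    (h : ∀ q f : ℤ, 0 < q → Odd q →
      (2 ^ N : ℤ) ∣ q * (∑ n ∈ range N, (s n : ℤ) * 2 ^ n) - f → (B : ℤ) ≤ max q |f|) :
    B ≤ ratComplexity N s := by
  set S := ∑ n ∈ range N, (s n : ℤ) * 2 ^ n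
  refine le_csInf ⟨(max 1 |S|).toNat, 1, S, one_pos, odd_one, by simp [S], ?_⟩ ?_
  · exact Int.toNat_of_nonneg (zero_le_one.trans (le_max_left _ _))
  · rintro m ⟨q, f, hq, hodd, hdvd, hm⟩
    exact_mod_cast hm ▸ h q f hq hodd hdvd

theorem sum_range_mul_pow_modEq (a : ℕ → ℤ) (b : ℤ) {M N : ℕ} (hMN : M ≤ N) :
    ∑ n ∈ range N, a n * b ^ n ≡ ∑ n ∈ range M, a n * b ^ n [ZMOD b ^ M] := by
  rw [← sum_range_add_sum_Ico _ hMN, Int.modEq_iff_dvd, sub_add_cancel_left, dvd_neg]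
  exact dvd_sum fun n hn => dvd_mul_of_dvd_right (pow_dvd_pow b (mem_Ico.mp hn).1) _

theorem sum_range_succ_mul_two_pow_of_ones_zero {s : ℕ → ℕ} {k : ℕ}
    (h1 : ∀ n < k, s n = 1) (hk0 : s k = 0) :
    ∑ n ∈ range (k + 1), (s n : ℤ) * 2 ^ n = 2 ^ k - 1 := by
  rw [sum_range_succ, hk0, Nat.cast_zero, zero_mul, add_zero,
    sum_congr rfl fun n hn => by rw [h1 n (mem_range.mp hn), Nat.cast_one, one_mul]]
  simpa using geom_sum_mul (2 : ℤ) k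

theorem two_pow_pred_lt_max_abs {k : ℕ} (hk : 2 ≤ k) {q f : ℤ} (hq : Odd q)
    (h : q * (2 ^ k - 1) ≡ f [ZMOD 2 ^ (k + 1)]) : 2 ^ (k - 1) < max |q| |f| := by
  by_contra! hle
  set P : ℤ := 2 ^ (k - 1)
  have hk_pow : (2 : ℤ) ^ k = 2 * P := by rw [← pow_succ']; congr 1; omega
  have hP_even : Even P := Int.even_pow.mpr ⟨even_two, by omega⟩
  have hqP : |q| < P := (le_max_left _ _ |>.trans hle).lt_of_ne fun hqP =>
    (Int.not_even_iff_odd.mpr (odd_abs.mpr hq)) (hqP ▸ hP_even)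
  have hfP : |f| ≤ P := le_max_right _ _ |>.trans hle
  have hsum : (2 : ℤ) ^ (k + 1) ∣ q + f - 2 ^ k := by
    obtain ⟨r, rfl⟩ := hq
    rw [show 2 * r + 1 + f - 2 ^ k = f - (2 * r + 1) * (2 ^ k - 1) + r * 2 ^ (k + 1) by ring]
    exact (Int.modEq_iff_dvd.mp h).add (Dvd.intro_left r rfl)
  have hsum_eq : q + f - 2 ^ k = 0 := Int.eq_zero_of_abs_lt_dvd hsum (by
    rw [pow_succ, hk_pow, abs_lt]
    constructor <;> linarith [abs_lt.mp hqP, abs_le.mp hfP])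
  linarith [abs_lt.mp hqP, abs_le.mp hfP]

theorem stmt6_general (N k : ℕ) (hk : N + 1 ≤ 2 * k) (hkN : k ≤ N - 1)
    (s : ℕ → ℕ)
    (h1 : ∀ n < k, s n = 1) (hk0 : s k = 0) :
    2 ^ (k - 1) + 1 ≤ ratComplexity N s := by
  have hprefix : ∑ n ∈ range N, (s n : ℤ) * 2 ^ n ≡ 2 ^ k - 1 [ZMOD 2 ^ (k + 1)] :=
    sum_range_succ_mul_two_pow_of_ones_zero h1 hk0 ▸ sum_range_mul_pow_modEq _ 2 (by omega)
  refine le_ratComplexity fun q f hq hodd hdvd => ?_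
  have hqf : q * (2 ^ k - 1) ≡ f [ZMOD 2 ^ (k + 1)] :=
    ((hprefix.mul_left q).symm.trans
      ((Int.modEq_iff_dvd.mpr hdvd).symm.of_dvd (pow_dvd_pow 2 (by omega))))
  have hlt := two_pow_pred_lt_max_abs (by omega) hodd hqf
  rw [abs_of_pos hq] at hlt
  push_cast
  omega

theorem stmt6 (N k : ℕ) (hk : N + 1 ≤ 2 * k) (hkN : k ≤ N - 1) (hN : 2 ≤ N)
    (s : ℕ → ℕ) (hbits : ∀ n < N, s n ≤ 1)
    (h1 : ∀ n < k, s n = 1) (hk0 : s k = 0) :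
    2 ^ (k - 1) + 1 ≤ ratComplexity N s :=
  stmt6_general N k hk hkN s h1 hk0
end

section
/- Let k ≥ (N+1)/2 and S_N = (1,…,1,0,s_{k+1},…,s_{N-1}) (k ones, then a zero, then arbitrary bits). Then Λ(S_N^rev) ≤ 2^{N-k}. -/
open Finset

theorem ratComplexity_le_natAbs {N : ℕ} {s : ℕ → ℕ} {f : ℤ} (hf : f ≠ 0)
    (hdvd : (2 ^ N : ℤ) ∣ (∑ n ∈ range N, (s n : ℤ) * 2 ^ n) - f) :
    ratComplexity N s ≤ f.natAbs := by
  refine Nat.sInf_le ⟨1, f, one_pos, odd_one, by rwa [one_mul], ?_⟩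
  rw [Int.natCast_natAbs, max_eq_right (Int.one_le_abs hf)]

theorem sum_bits_mul_two_pow_lt {N : ℕ} {s : ℕ → ℕ} (hbits : ∀ n < N, s n ≤ 1) :
    ∑ n ∈ range N, (s n : ℤ) * 2 ^ n < 2 ^ N := by
  calc ∑ n ∈ range N, (s n : ℤ) * 2 ^ n
      ≤ ∑ n ∈ range N, (2 : ℤ) ^ n := by
        refine sum_le_sum fun n hn => ?_
        have : (s n : ℤ) ≤ 1 := by exact_mod_cast hbits n (mem_range.mp hn)
        nlinarith [pow_pos (two_pos : (0 : ℤ) < 2) n]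
    _ = 2 ^ N - 1 := by simpa using geom_sum_mul (2 : ℤ) N
    _ < 2 ^ N := sub_one_lt _

theorem two_pow_sub_two_pow_le_sum_bits {N j : ℕ} {s : ℕ → ℕ} (hj : j ≤ N)
    (hones : ∀ n, j ≤ n → n < N → s n = 1) :
    (2 : ℤ) ^ N - 2 ^ j ≤ ∑ n ∈ range N, (s n : ℤ) * 2 ^ n := by
  have hhigh : ∑ n ∈ Ico j N, (s n : ℤ) * 2 ^ n = 2 ^ N - 2 ^ j := by
    have hterm : ∀ n ∈ Ico j N, (s n : ℤ) * 2 ^ n = 2 ^ n := fun n hn => by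
      rw [mem_Ico] at hn
      rw [hones n hn.1 hn.2, Nat.cast_one, one_mul]
    rw [sum_congr rfl hterm]
    simpa using geom_sum_Ico_mul (2 : ℤ) hj
  have hlow : 0 ≤ ∑ n ∈ range j, (s n : ℤ) * 2 ^ n := by positivity
  rw [← sum_range_add_sum_Ico _ hj, hhigh]
  linarith

theorem stmt7_general (N k : ℕ)
    (s : ℕ → ℕ) (hbits : ∀ n < N, s n ≤ 1)
    (h1 : ∀ n < k, s n = 1) :
    ratComplexity N (fun n => s (N - 1 - n)) ≤ 2 ^ (N - k) := by
  set T : ℤ := ∑ n ∈ range N, (s (N - 1 - n) : ℤ) * 2 ^ n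
  have hT_lt : T < 2 ^ N := sum_bits_mul_two_pow_lt fun n hn => hbits _ (by omega)
  have hT_ge : 2 ^ N - 2 ^ (N - k) ≤ T :=
    two_pow_sub_two_pow_le_sum_bits (Nat.sub_le N k) fun n hn hnN => h1 _ (by omega)
  calc ratComplexity N (fun n => s (N - 1 - n))
      ≤ (T - 2 ^ N).natAbs := ratComplexity_le_natAbs (by omega) ⟨1, by ring⟩
    _ ≤ 2 ^ (N - k) := by
        zify
        rw [abs_of_neg (by linarith)]
        linarith

theorem stmt7 (N k : ℕ) (hk : N + 1 ≤ 2 * k) (hkN : k ≤ N - 1) (hN : 2 ≤ N)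
    (s : ℕ → ℕ) (hbits : ∀ n < N, s n ≤ 1)
    (h1 : ∀ n < k, s n = 1) (hk0 : s k = 0) :
    ratComplexity N (fun n => s (N - 1 - n)) ≤ 2 ^ (N - k) :=
  stmt7_general N k s hbits h1
end

section
/- For every function r : ℕ → ℝ with r(N) → ∞, the expected value E_N^{rat-sym} := 2^{-N} ∑_{S_N ∈ {0,1}^N} Λ^sym(S_N) satisfies E_N^{rat-sym} ≥ (1 − c·4^{−r(N)}) · 2^{N/2 − r(N)} for some absolute constant c > 0 and all N; in particular E_N^{rat-sym} = 2^{N/2 − r(N) + o(1)} from below. -/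
/-!
A witness pair `(q, f)` for `Λ(x) ≤ W` determines `x < 2 ^ N`: `q` is odd, hence invertible
modulo `2 ^ N`, and `q x ≡ f`. So at most `W (2W + 1)` sequences have `Λ ≤ W`, and, bit reversal
being a bijection, at most twice as many have `Λ^sym ≤ W`. For `W = ⌊2^{N/2} / 4⌋` this leaves
at least half of all sequences with `Λ^sym > W`, so the average of `Λ^sym` is at least
`2^{N/2} / 8`. Since `(1 - 16 u²) u ≤ 1/8` for `u ≥ 0`, this dominates
`(1 - 16 · 4^{-r}) · 2^{N/2 - r}` for every `r`.
-/

/-- The `N`th rational complexity of the binary sequence given by the bits of `x`. -/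
noncomputable def ratComplexityX (N x : ℕ) : ℕ :=
  sInf {m : ℕ | ∃ q f : ℤ, 0 < q ∧ Odd q ∧
    (2 ^ N : ℤ) ∣ q * (x : ℤ) - f ∧ (m : ℤ) = max q |f|}

/-- The integer whose base-2 digit string of length `N` is the reverse of that of `x`. -/
def revBits (N x : ℕ) : ℕ :=
  ∑ n ∈ Finset.range N, (if x.testBit n then 2 ^ (N - 1 - n) else 0)

/-- The `N`th symmetric rational complexity. -/
noncomputable def symRatComplexityX (N x : ℕ) : ℕ :=
  min (ratComplexityX N x) (ratComplexityX N (revBits N x))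

open Finset

theorem ratComplexityX_spec (N x : ℕ) : ∃ q f : ℤ, 0 < q ∧ Odd q ∧
    (2 ^ N : ℤ) ∣ q * x - f ∧ (ratComplexityX N x : ℤ) = max q |f| :=
  Nat.sInf_mem (s := {m : ℕ | ∃ q f : ℤ, 0 < q ∧ Odd q ∧
    (2 ^ N : ℤ) ∣ q * (x : ℤ) - f ∧ (m : ℤ) = max q |f|})
    ⟨max 1 x, 1, x, one_pos, odd_one, by simp, by simp⟩

theorem eq_of_two_pow_dvd_odd_mul_sub {N x y : ℕ} {q f : ℤ} (hq : Odd q)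
    (hx : x < 2 ^ N) (hy : y < 2 ^ N)
    (hxf : (2 ^ N : ℤ) ∣ q * x - f) (hyf : (2 ^ N : ℤ) ∣ q * y - f) : x = y := by
  have hdvd : (2 ^ N : ℤ) ∣ q * ((y : ℤ) - x) := by
    have := dvd_sub hyf hxf
    rwa [sub_sub_sub_cancel_right, ← mul_sub] at this
  have hcop : IsCoprime (2 ^ N : ℤ) q := (Int.isCoprime_two_left.mpr hq).pow_left
  have hmod : x ≡ y [MOD 2 ^ N] := by
    rw [Nat.modEq_iff_dvd]; exact_mod_cast hcop.dvd_of_dvd_mul_left hdvd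
  exact hmod.eq_of_lt_of_lt hx hy

theorem card_filter_ratComplexityX_le (N W : ℕ) :
    #{x ∈ range (2 ^ N) | ratComplexityX N x ≤ W} ≤ W * (2 * W + 1) := by
  choose q f hq hodd hdvd hmax using ratComplexityX_spec N
  calc #{x ∈ range (2 ^ N) | ratComplexityX N x ≤ W}
      ≤ #(Icc (1 : ℤ) W ×ˢ Icc (-W : ℤ) W) := by
        refine card_le_card_of_injOn (fun x => (q x, f x)) ?_ ?_
        · intro x hx
          simp only [coe_filter, mem_range, Set.mem_ofPred_eq] at hx
          have hle : max (q x) |f x| ≤ W := hmax x ▸ (by exact_mod_cast hx.2)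
          simp only [coe_product, Set.mem_prod, coe_Icc, Set.mem_Icc]
          exact ⟨⟨hq x, (le_max_left _ _).trans hle⟩, abs_le.mp ((le_max_right _ _).trans hle)⟩
        · intro x hx y hy hxy
          simp only [coe_filter, mem_range, Set.mem_ofPred_eq, Prod.mk.injEq] at hx hy hxy
          refine eq_of_two_pow_dvd_odd_mul_sub (hodd x) hx.1 hy.1 (hdvd x) ?_
          rw [hxy.1, hxy.2]
          exact hdvd y
    _ = W * (2 * W + 1) := by simp; omega

theorem revBits_eq_sum_two_pow (N x : ℕ) :
    revBits N x = ∑ m ∈ range N with x.testBit (N - 1 - m), 2 ^ m := by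
  rw [sum_filter, revBits, ← sum_range_reflect]
  refine sum_congr rfl fun m hm => ?_
  rw [show N - 1 - (N - 1 - m) = m by simp at hm; omega]

theorem testBit_revBits (N x m : ℕ) :
    (revBits N x).testBit m = (decide (m < N) && x.testBit (N - 1 - m)) := by
  rw [Bool.eq_iff_iff, ← Nat.mem_bitIndices, ← List.mem_toFinset, revBits_eq_sum_two_pow,
    toFinset_bitIndices_sum_two_pow]
  simp

theorem revBits_lt (N x : ℕ) : revBits N x < 2 ^ N :=
  Nat.lt_pow_two_of_testBit _ fun m hm => by simp [testBit_revBits, Nat.not_lt.mpr hm]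

theorem revBits_revBits {N x : ℕ} (hx : x < 2 ^ N) : revBits N (revBits N x) = x := by
  refine Nat.eq_of_testBit_eq fun m => ?_
  rw [testBit_revBits, testBit_revBits]
  by_cases hm : m < N
  · simp [hm, show N - 1 - (N - 1 - m) = m by omega, show N - 1 - m < N by omega]
  · simp [hm, Nat.testBit_lt_two_pow (hx.trans_le (Nat.pow_le_pow_right two_pos (not_lt.mp hm)))]

theorem card_filter_symRatComplexityX_le (N W : ℕ) :
    #{x ∈ range (2 ^ N) | symRatComplexityX N x ≤ W} ≤ 2 * (W * (2 * W + 1)) := by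
  have hrev : #{x ∈ range (2 ^ N) | ratComplexityX N (revBits N x) ≤ W} ≤
      #{x ∈ range (2 ^ N) | ratComplexityX N x ≤ W} := by
    refine card_le_card_of_injOn (revBits N) (fun x hx => ?_) (fun x hx y hy hxy => ?_)
    · simp only [coe_filter, mem_range, Set.mem_ofPred_eq] at hx ⊢
      exact ⟨revBits_lt N x, hx.2⟩
    · simp only [coe_filter, mem_range, Set.mem_ofPred_eq] at hx hy
      rw [← revBits_revBits hx.1, hxy, revBits_revBits hy.1]
  calc #{x ∈ range (2 ^ N) | symRatComplexityX N x ≤ W}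
      ≤ #({x ∈ range (2 ^ N) | ratComplexityX N x ≤ W} ∪
          {x ∈ range (2 ^ N) | ratComplexityX N (revBits N x) ≤ W}) := by
        rw [← filter_or]
        exact card_le_card (monotone_filter_right _ fun _ _ => min_le_iff.mp)
    _ ≤ 2 * (W * (2 * W + 1)) := by
        have := card_filter_ratComplexityX_le N W
        have := card_union_le {x ∈ range (2 ^ N) | ratComplexityX N x ≤ W}
          {x ∈ range (2 ^ N) | ratComplexityX N (revBits N x) ≤ W}
        omega

theorem sum_symRatComplexityX_ge (N W : ℕ) :
    ((W : ℝ) + 1) * (2 ^ N - 2 * (W * (2 * W + 1))) ≤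
      ∑ x ∈ range (2 ^ N), (symRatComplexityX N x : ℝ) := by
  have hG : (2 : ℝ) ^ N ≤ #{x ∈ range (2 ^ N) | W < symRatComplexityX N x} +
      2 * (W * (2 * W + 1)) := by
    have := card_filter_add_card_filter_not (s := range (2 ^ N)) (W < symRatComplexityX N ·)
    have := card_filter_symRatComplexityX_le N W
    simp only [not_lt, card_range] at *
    exact_mod_cast (by omega : 2 ^ N ≤ _)
  set G := {x ∈ range (2 ^ N) | W < symRatComplexityX N x}
  calc ((W : ℝ) + 1) * (2 ^ N - 2 * (W * (2 * W + 1)))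
      ≤ #G • ((W : ℝ) + 1) := by
        rw [nsmul_eq_mul, mul_comm]
        gcongr
        linarith
    _ ≤ ∑ x ∈ G, (symRatComplexityX N x : ℝ) :=
        card_nsmul_le_sum _ _ _ fun x hx => by
          exact_mod_cast (mem_filter.mp hx).2
    _ ≤ ∑ x ∈ range (2 ^ N), (symRatComplexityX N x : ℝ) :=
        sum_le_sum_of_subset_of_nonneg (filter_subset _ _) fun _ _ _ => by positivity

theorem two_rpow_half_div_eight_le_avg_symRatComplexityX (N : ℕ) :
    (2 : ℝ) ^ ((N : ℝ) / 2) / 8 ≤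
      (2 : ℝ) ^ (-(N : ℝ)) * ∑ x ∈ range (2 ^ N), (symRatComplexityX N x : ℝ) := by
  set s := (2 : ℝ) ^ ((N : ℝ) / 2)
  have hs : s ^ 2 = 2 ^ N := by
    rw [← Real.rpow_natCast, ← Real.rpow_mul zero_le_two]
    norm_num
  set W := ⌊s / 4⌋₊
  have hW : (W : ℝ) ≤ s / 4 := Nat.floor_le (by positivity)
  have hW' : s / 4 < W + 1 := Nat.lt_floor_add_one _
  have hWW : (W : ℝ) ≤ W * W := by exact_mod_cast Nat.le_mul_self W
  have hbad : 2 * ((W : ℝ) * (2 * W + 1)) ≤ 2 ^ N / 2 := by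
    nlinarith [mul_self_le_mul_self (Nat.cast_nonneg W) hW]
  have h2N : (2 : ℝ) ^ (-(N : ℝ)) * 2 ^ N = 1 := by
    rw [Real.rpow_neg zero_le_two, Real.rpow_natCast, inv_mul_cancel₀ (by positivity)]
  calc s / 8 ≤ ((W : ℝ) + 1) / 2 := by linarith
    _ = (2 : ℝ) ^ (-(N : ℝ)) * (((W : ℝ) + 1) * (2 ^ N / 2)) := by
        linear_combination (-((W : ℝ) + 1) / 2) * h2N
    _ ≤ _ := by
        gcongr
        exact le_trans (by gcongr; linarith) (sum_symRatComplexityX_ge N W)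

/-- The expected value of the symmetric rational complexity is at least
`(1 - c·4^{-r(N)})·2^{N/2 - r(N)}`. -/
theorem stmt9 :
    ∃ c : ℝ, 0 < c ∧ ∀ r : ℕ → ℝ, Filter.Tendsto r Filter.atTop Filter.atTop →
      ∀ N : ℕ,
        (1 - c * (4 : ℝ) ^ (-r N)) * (2 : ℝ) ^ ((N : ℝ) / 2 - r N) ≤
          (2 : ℝ) ^ (-(N : ℝ)) *
            ∑ x ∈ Finset.range (2 ^ N), (symRatComplexityX N x : ℝ) := by
  refine ⟨16, by norm_num, fun r _ N => ?_⟩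
  set u := (2 : ℝ) ^ (-r N)
  have hu : 0 ≤ u := by positivity
  have h4 : (4 : ℝ) ^ (-r N) = u ^ 2 := by
    rw [show (4 : ℝ) = 2 ^ 2 by norm_num, ← Real.rpow_natCast, ← Real.rpow_mul zero_le_two,
      ← Real.rpow_natCast, ← Real.rpow_mul zero_le_two, mul_comm]
  have hsplit : (2 : ℝ) ^ ((N : ℝ) / 2 - r N) = (2 : ℝ) ^ ((N : ℝ) / 2) * u := by
    rw [sub_eq_add_neg, Real.rpow_add two_pos]
  -- `16 u³ - u + 1/8 ≥ (256/27) (u - 3/16)² (u + 3/8) ≥ 0`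
  have hcubic : (1 - 16 * u ^ 2) * u ≤ 1 / 8 := by
    nlinarith [mul_nonneg (sq_nonneg (u - 3 / 16)) (by linarith : 0 ≤ u + 3 / 8), pow_nonneg hu 3]
  calc (1 - 16 * (4 : ℝ) ^ (-r N)) * (2 : ℝ) ^ ((N : ℝ) / 2 - r N)
      = (1 - 16 * u ^ 2) * u * (2 : ℝ) ^ ((N : ℝ) / 2) := by rw [h4, hsplit]; ring
    _ ≤ (2 : ℝ) ^ ((N : ℝ) / 2) / 8 := by nlinarith [Real.rpow_nonneg zero_le_two ((N : ℝ) / 2)]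
    _ ≤ _ := two_rpow_half_div_eight_le_avg_symRatComplexityX N
end

section
/- Let N ≥ 2 and ⌈N/2⌉ ≤ k ≤ N-1. For S_N = (0,…,0,1,s_{k+1},…,s_{N-1}) (k zeros, then a one), the N-th linear complexity satisfies L(S_N) ≥ k+1, while the reversed sequence satisfies L(S_N^rev) ≤ N−k. -/
/-- The `N`th linear complexity of a binary sequence: the least `L` such that the first
`N` terms satisfy a linear recurrence of order `L` over `F₂`. -/
noncomputable def nthLinComplexity (N : ℕ) (s : ℕ → ZMod 2) : ℕ :=
  sInf {L | ∃ c : ℕ → ZMod 2,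
    ∀ n : ℕ, n + L < N → s (n + L) = ∑ ℓ ∈ Finset.range L, c ℓ * s (n + ℓ)}

/-!
A recurrence of order `L ≤ k` evaluated at index `k` expresses `s k = 1` through the `L`
preceding terms, all of which are zero; so every valid recurrence has order at least `k + 1`.
Reversed, the `k` leading zeros become `k` trailing zeros, which the zero recurrence of order
`N - k` generates.
-/

theorem nthLinComplexity_le_of_recurrence {N L : ℕ} {s : ℕ → ZMod 2} (c : ℕ → ZMod 2)
    (hc : ∀ n : ℕ, n + L < N → s (n + L) = ∑ ℓ ∈ Finset.range L, c ℓ * s (n + ℓ)) :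
    nthLinComplexity N s ≤ L :=
  Nat.sInf_le ⟨c, hc⟩

theorem nthLinComplexity_le_of_eq_zero {N L : ℕ} {s : ℕ → ZMod 2}
    (hs : ∀ m, L ≤ m → m < N → s m = 0) :
    nthLinComplexity N s ≤ L :=
  nthLinComplexity_le_of_recurrence 0 fun n hn => by
    simp only [Pi.zero_apply, zero_mul, Finset.sum_const_zero]
    exact hs _ (Nat.le_add_left L n) hn

theorem exists_recurrence_nthLinComplexity (N : ℕ) (s : ℕ → ZMod 2) :
    ∃ c : ℕ → ZMod 2, ∀ n : ℕ, n + nthLinComplexity N s < N →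
      s (n + nthLinComplexity N s) =
        ∑ ℓ ∈ Finset.range (nthLinComplexity N s), c ℓ * s (n + ℓ) := by
  have hNmem : N ∈ {L | ∃ c : ℕ → ZMod 2,
      ∀ n : ℕ, n + L < N → s (n + L) = ∑ ℓ ∈ Finset.range L, c ℓ * s (n + ℓ)} :=
    ⟨0, fun n hn => absurd hn (by omega)⟩
  exact Nat.sInf_mem ⟨N, hNmem⟩

theorem lt_nthLinComplexity_of_leading_zeros {N k : ℕ} {s : ℕ → ZMod 2} (hkN : k < N)
    (h0 : ∀ n < k, s n = 0) (hk : s k ≠ 0) :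
    k < nthLinComplexity N s := by
  by_contra! hL
  obtain ⟨c, hc⟩ := exists_recurrence_nthLinComplexity N s
  have hterms : ∀ ℓ ∈ Finset.range (nthLinComplexity N s),
      c ℓ * s (k - nthLinComplexity N s + ℓ) = 0 := fun ℓ hℓ => by
    rw [h0 _ (by rw [Finset.mem_range] at hℓ; omega), mul_zero]
  have hrec := hc (k - nthLinComplexity N s) (by omega)
  rw [Nat.sub_add_cancel hL, Finset.sum_eq_zero hterms] at hrec
  exact hk hrec

theorem stmt11_general (N k : ℕ) (hN : 2 ≤ N) (hkN : k ≤ N - 1)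
    (s : ℕ → ZMod 2) (h0 : ∀ n < k, s n = 0) (hk1 : s k = 1) :
    k + 1 ≤ nthLinComplexity N s ∧
    nthLinComplexity N (fun n => s (N - 1 - n)) ≤ N - k :=
  ⟨lt_nthLinComplexity_of_leading_zeros (by omega) h0 (by rw [hk1]; exact one_ne_zero),
    nthLinComplexity_le_of_eq_zero fun _ hm _ => h0 _ (by omega)⟩

theorem stmt11 (N k : ℕ) (hN : 2 ≤ N) (hk : (N + 1) / 2 ≤ k) (hkN : k ≤ N - 1)
    (s : ℕ → ZMod 2) (h0 : ∀ n < k, s n = 0) (hk1 : s k = 1) :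
    k + 1 ≤ nthLinComplexity N s ∧
    nthLinComplexity N (fun n => s (N - 1 - n)) ≤ N - k :=
  stmt11_general N k hN hkN s h0 hk1
end

section
/- For 1 ≤ L ≤ N, the number of binary sequences of length N with N-th linear complexity exactly L is 2^{min(2L−1, 2N−2L)}, and exactly one sequence (the zero sequence) has linear complexity 0. Consequently, ∑_{L=0}^{N} A_N(L) = 2^N. -/
/-- Extension of a finite binary word to a sequence (by zeros). -/
def extSeq (N : ℕ) (v : Fin N → ZMod 2) : ℕ → ZMod 2 :=
  fun n => if h : n < N then v ⟨n, h⟩ else 0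

/-- `A N L`: the number of binary sequences of length `N` with `N`th linear complexity `L`. -/
noncomputable def A (N L : ℕ) : ℕ :=
  (Finset.univ.filter fun v : Fin N → ZMod 2 => nthLinComplexity N (extSeq N v) = L).card

/-!
The complexity profile obeys Massey's recursion. If a shortest recurrence of length
`L = L(S_N)` predicts the next bit correctly then `L(S_{N+1}) = L`, and otherwise
`L(S_{N+1}) = max L (N + 1 - L)`. The lower bound `N + 1 - L` is Massey's lemma: if
recurrences `a` of length `L` valid on `S_N` and `q` of length `L'` valid on `S_{N+1}` have
`L + L' ≤ N`, then `a` also predicts `s_N`, as one sees by summing the array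
`a i * q j * s (M + i + j)` in two orders. The upper bound comes from the Berlekamp–Massey
update, which cancels the failure of `a` against the recurrence in force before the last
length change. Of the two one-bit extensions of a word exactly one is predicted
correctly, which gives the recursion
`A (N+1) L = A N L + [N + 1 ≤ 2L] A N L + [N + 2 ≤ 2L ≤ 2N + 2] A N (N + 1 - L)`,
solved by induction on `N`.
-/

open Finset

lemma zmod_two_eq_one_of_ne_zero {x : ZMod 2} (h : x ≠ 0) : x = 1 := by
  revert x; decide

/-- The discrepancy at position `n + L` of the recurrence with coefficients `a` of degree `L`. -/
def recSum (s a : ℕ → ZMod 2) (L n : ℕ) : ZMod 2 :=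
  ∑ i ∈ range (L + 1), a i * s (n + i)

/-- `a` is the coefficient sequence of a monic polynomial of degree `L` whose recurrence holds
on the first `N` terms of `s`. -/
structure Generates (s : ℕ → ZMod 2) (N L : ℕ) (a : ℕ → ZMod 2) : Prop where
  monic : a L = 1
  support : ∀ i, L < i → a i = 0
  recSum_eq_zero : ∀ n, n + L < N → recSum s a L n = 0

/-- Coefficients of `X ^ k * a`. -/
def mulXPow (k : ℕ) (a : ℕ → ZMod 2) : ℕ → ZMod 2 :=
  fun i => if k ≤ i then a (i - k) else 0

section recSum

variable {s t a b : ℕ → ZMod 2} {L M N n : ℕ}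

lemma recSum_add : recSum s (a + b) L n = recSum s a L n + recSum s b L n := by
  simp only [recSum, Pi.add_apply, add_mul, sum_add_distrib]

lemma recSum_of_support_le (h : ∀ i, L < i → a i = 0) (hLM : L ≤ M) :
    recSum s a M n = recSum s a L n := by
  refine (sum_subset (range_subset_range.mpr (by omega)) fun i _ hi => ?_).symm
  rw [h i (by simp at hi; omega), zero_mul]

lemma recSum_mulXPow (k : ℕ) : recSum s (mulXPow k a) (k + L) n = recSum s a L (n + k) := by
  rw [recSum, show k + L + 1 = k + (L + 1) by omega, sum_range_add,
    sum_eq_zero fun i hi => by simp [mulXPow, show ¬k ≤ i by simp at hi; omega], zero_add]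
  refine sum_congr rfl fun i _ => ?_
  simp only [mulXPow, le_add_iff_nonneg_right, zero_le, if_true, add_tsub_cancel_left,
    add_assoc]

lemma mulXPow_eq_zero (h : ∀ i, L < i → a i = 0) (k : ℕ) {i : ℕ} (hi : k + L < i) :
    mulXPow k a i = 0 := by
  simp only [mulXPow]
  split_ifs
  · exact h _ (by omega)
  · rfl

lemma mulXPow_add (k i : ℕ) : mulXPow k a (k + i) = a i := by
  simp [mulXPow]

/-- The key identity behind Massey's lemma: both sides sum `a i * b j * s (n + i + j)`. -/
lemma sum_mul_recSum_comm (s a b : ℕ → ZMod 2) (L M n : ℕ) :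
    ∑ j ∈ range (M + 1), b j * recSum s a L (n + j) =
      ∑ i ∈ range (L + 1), a i * recSum s b M (n + i) := by
  simp only [recSum, mul_sum]
  rw [sum_comm]
  refine sum_congr rfl fun i _ => sum_congr rfl fun j _ => ?_
  rw [show n + j + i = n + i + j by omega]
  ring

lemma recSum_sub_recSum_of_eqOn (hL : a L = 1) (hLN : L ≤ N) (hst : ∀ m < N, s m = t m) :
    recSum s a L (N - L) - recSum t a L (N - L) = s N - t N := by
  have hlow : ∑ i ∈ range L, a i * s (N - L + i) = ∑ i ∈ range L, a i * t (N - L + i) :=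
    sum_congr rfl fun i hi => by rw [hst _ (by simp at hi; omega)]
  simp only [recSum, sum_range_succ, hlow, hL, show N - L + L = N by omega]
  ring

end recSum

namespace Generates

variable {s t a b q : ℕ → ZMod 2} {L L' Lb M N m : ℕ}

lemma mono (h : Generates s N L a) (hMN : M ≤ N) : Generates s M L a :=
  ⟨h.monic, h.support, fun n hn => h.recSum_eq_zero n (by omega)⟩

lemma congr (h : Generates s N L a) (hst : ∀ m < N, s m = t m) : Generates t N L a := by
  refine ⟨h.monic, h.support, fun n hn => ?_⟩
  rw [← h.recSum_eq_zero n hn]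
  exact sum_congr rfl fun i hi => by rw [hst _ (by simp at hi; omega)]

lemma succ_of_recSum_eq_zero (h : Generates s N L a) (hd : recSum s a L (N - L) = 0) :
    Generates s (N + 1) L a := by
  refine ⟨h.monic, h.support, fun n hn => ?_⟩
  rcases Nat.lt_or_ge (n + L) N with hlt | hge
  · exact h.recSum_eq_zero n hlt
  · rwa [show n = N - L by omega]

/-- Massey's lemma. -/
lemma recSum_eq_zero_of_add_le (ha : Generates s N L a) (hq : Generates s (N + 1) L' q)
    (h : L + L' ≤ N) : recSum s a L (N - L) = 0 := by
  have key := sum_mul_recSum_comm s a q L L' (N - L - L')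
  have hrhs : ∑ i ∈ range (L + 1), a i * recSum s q L' (N - L - L' + i) = 0 :=
    sum_eq_zero fun i hi => by rw [hq.recSum_eq_zero _ (by simp at hi; omega), mul_zero]
  have hlow : ∑ j ∈ range L', q j * recSum s a L (N - L - L' + j) = 0 :=
    sum_eq_zero fun j hj => by rw [ha.recSum_eq_zero _ (by simp at hj; omega), mul_zero]
  rwa [hrhs, sum_range_succ, hlow, hq.monic, zero_add, one_mul,
    show N - L - L' + L' = N - L by omega] at key

/-- The Berlekamp–Massey update: `a` fails at position `N`, `b` at an earlier position `m`,
and the shifted sum cancels both failures. -/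
lemma bmUpdate (ha : Generates s N L a) (hda : recSum s a L (N - L) = 1)
    (hb : Generates s m Lb b) (hdb : recSum s b Lb (m - Lb) = 1)
    (hmN : m < N) (hLN : L ≤ N) (hLbm : Lb ≤ m) :
    Generates s (N + 1) (max L (Lb + (N - m)))
      (mulXPow (max L (Lb + (N - m)) - L) a +
        mulXPow (max L (Lb + (N - m)) - (Lb + (N - m))) b) := by
  set L' := max L (Lb + (N - m))
  set k := L' - L
  set j := L' - (Lb + (N - m))
  have hk : k + L = L' := by omega
  refine ⟨?_, fun i hi => ?_, fun n hn => ?_⟩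
  · rw [Pi.add_apply, ← hk, mulXPow_add, ha.monic,
      mulXPow_eq_zero hb.support j (by omega), add_zero]
  · rw [Pi.add_apply, mulXPow_eq_zero ha.support k (by omega),
      mulXPow_eq_zero hb.support j (by omega), add_zero]
  · rw [recSum_add, ← hk, recSum_mulXPow, hk,
      recSum_of_support_le (fun i hi => mulXPow_eq_zero hb.support j hi) (by omega : j + Lb ≤ L'),
      recSum_mulXPow]
    rcases Nat.lt_or_ge (n + L') N with hlt | hge
    · rw [ha.recSum_eq_zero _ (by omega), hb.recSum_eq_zero _ (by omega), add_zero]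
    · rw [show n + k = N - L by omega, show n + j = m - Lb by omega, hda, hdb]
      exact CharTwo.add_self_eq_zero 1

end Generates

section nthLinComplexity

variable {s t a : ℕ → ZMod 2} {L M N : ℕ}

lemma nthLinComplexity_eq_sInf (N : ℕ) (s : ℕ → ZMod 2) :
    nthLinComplexity N s = sInf {L | ∃ a, Generates s N L a} := by
  unfold nthLinComplexity
  congr 1
  ext L
  constructor
  · rintro ⟨c, hc⟩
    refine ⟨fun i => if i < L then c i else if i = L then 1 else 0, by simp,
      fun i hi => by simp [hi.ne', hi.not_gt], fun n hn => ?_⟩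
    have hlow : ∑ i ∈ range L, (if i < L then c i else if i = L then 1 else 0) * s (n + i) =
        ∑ i ∈ range L, c i * s (n + i) :=
      sum_congr rfl fun i hi => by simp [mem_range.mp hi]
    simp only [recSum, sum_range_succ, hlow, lt_irrefl, if_false, if_true, one_mul, ← hc n hn]
    exact CharTwo.add_self_eq_zero _
  · rintro ⟨a, ha⟩
    refine ⟨a, fun n hn => ?_⟩
    have h := ha.recSum_eq_zero n hn
    rw [recSum, sum_range_succ, ha.monic, one_mul, CharTwo.add_eq_zero] at h
    exact h.symm

lemma generates_self (s : ℕ → ZMod 2) (N : ℕ) : Generates s N N (Pi.single N 1) :=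
  ⟨Pi.single_eq_same _ _, fun i hi => Pi.single_eq_of_ne hi.ne' _,
    fun n hn => absurd hn (by omega)⟩

lemma exists_generates_nthLinComplexity (s : ℕ → ZMod 2) (N : ℕ) :
    ∃ a, Generates s N (nthLinComplexity N s) a := by
  rw [nthLinComplexity_eq_sInf]
  exact Nat.sInf_mem (s := {L | ∃ a, Generates s N L a}) ⟨N, _, generates_self s N⟩

lemma nthLinComplexity_le_of_generates (h : Generates s N L a) : nthLinComplexity N s ≤ L := by
  rw [nthLinComplexity_eq_sInf]
  exact Nat.sInf_le ⟨a, h⟩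

lemma nthLinComplexity_le (s : ℕ → ZMod 2) (N : ℕ) : nthLinComplexity N s ≤ N :=
  nthLinComplexity_le_of_generates (generates_self s N)

lemma nthLinComplexity_mono (s : ℕ → ZMod 2) (hMN : M ≤ N) :
    nthLinComplexity M s ≤ nthLinComplexity N s :=
  let ⟨_, h⟩ := exists_generates_nthLinComplexity s N
  nthLinComplexity_le_of_generates (h.mono hMN)

lemma nthLinComplexity_congr (hst : ∀ m < N, s m = t m) :
    nthLinComplexity N s = nthLinComplexity N t := by
  obtain ⟨a, ha⟩ := exists_generates_nthLinComplexity s N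
  obtain ⟨b, hb⟩ := exists_generates_nthLinComplexity t N
  exact le_antisymm (nthLinComplexity_le_of_generates (hb.congr fun m hm => (hst m hm).symm))
    (nthLinComplexity_le_of_generates (ha.congr hst))

lemma nthLinComplexity_eq_zero_iff : nthLinComplexity N s = 0 ↔ ∀ n < N, s n = 0 := by
  have recSum_zero (a : ℕ → ZMod 2) (n : ℕ) : recSum s a 0 n = a 0 * s n := by simp [recSum]
  constructor
  · intro h n hn
    obtain ⟨a, ha⟩ := exists_generates_nthLinComplexity s N
    rw [h] at ha
    simpa [recSum_zero, ha.monic] using ha.recSum_eq_zero n (by omega)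
  · intro h
    refine Nat.le_zero.mp (nthLinComplexity_le_of_generates (a := Pi.single 0 1)
      ⟨Pi.single_eq_same _ _, fun i hi => Pi.single_eq_of_ne hi.ne' _, fun n hn => ?_⟩)
    simp [recSum_zero, h n (by omega)]

lemma nthLinComplexity_succ_of_recSum_eq_zero (ha : Generates s N L a)
    (hL : nthLinComplexity N s = L) (hd : recSum s a L (N - L) = 0) :
    nthLinComplexity (N + 1) s = L :=
  le_antisymm (nthLinComplexity_le_of_generates (ha.succ_of_recSum_eq_zero hd))
    (hL ▸ nthLinComplexity_mono s N.le_succ)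

lemma le_nthLinComplexity_succ (ha : Generates s N L a) (hd : recSum s a L (N - L) ≠ 0) :
    N + 1 - L ≤ nthLinComplexity (N + 1) s := by
  obtain ⟨q, hq⟩ := exists_generates_nthLinComplexity s (N + 1)
  by_contra h
  exact hd (ha.recSum_eq_zero_of_add_le hq (by omega))

/-- What Berlekamp–Massey stores besides the current recurrence: a recurrence `b` that first
fails at position `m`, with `m + 1 - Lb` the current complexity (in the algorithm, the
recurrence in force before the last length change). -/
def HasPrevGenerator (s : ℕ → ZMod 2) (N : ℕ) : Prop :=
  0 < nthLinComplexity N s → ∃ m Lb b, m < N ∧ Lb ≤ m ∧ Generates s m Lb b ∧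
    recSum s b Lb (m - Lb) = 1 ∧ nthLinComplexity N s = m + 1 - Lb

lemma nthLinComplexity_succ_of_recSum_ne_zero (hprev : HasPrevGenerator s N)
    (ha : Generates s N L a) (hL : nthLinComplexity N s = L) (hd : recSum s a L (N - L) ≠ 0) :
    nthLinComplexity (N + 1) s = max L (N + 1 - L) := by
  refine le_antisymm ?_
    (max_le (hL ▸ nthLinComplexity_mono s N.le_succ) (le_nthLinComplexity_succ ha hd))
  rcases Nat.eq_zero_or_pos L with hL0 | hLpos
  · simpa [hL0] using nthLinComplexity_le s (N + 1)
  obtain ⟨m, Lb, b, hmN, hLbm, hb, hdb, hLm⟩ := hprev (hL ▸ hLpos)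
  have hupd := ha.bmUpdate (zmod_two_eq_one_of_ne_zero hd) hb hdb hmN
    (hL ▸ nthLinComplexity_le s N) hLbm
  rw [show Lb + (N - m) = N + 1 - L by omega] at hupd
  exact nthLinComplexity_le_of_generates hupd

lemma HasPrevGenerator.succ (hprev : HasPrevGenerator s N) : HasPrevGenerator s (N + 1) := by
  intro hpos
  obtain ⟨a, ha⟩ := exists_generates_nthLinComplexity s N
  by_cases hsame : nthLinComplexity (N + 1) s = nthLinComplexity N s
  · rw [hsame] at hpos ⊢
    obtain ⟨m, Lb, b, hmN, h⟩ := hprev hpos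
    exact ⟨m, Lb, b, by omega, h⟩
  · have hd : recSum s a (nthLinComplexity N s) (N - nthLinComplexity N s) ≠ 0 :=
      fun hd => hsame (nthLinComplexity_succ_of_recSum_eq_zero ha rfl hd)
    have hval := nthLinComplexity_succ_of_recSum_ne_zero hprev ha rfl hd
    exact ⟨N, _, a, N.lt_succ_self, nthLinComplexity_le s N, ha,
      zmod_two_eq_one_of_ne_zero hd, by omega⟩

lemma hasPrevGenerator (s : ℕ → ZMod 2) (N : ℕ) : HasPrevGenerator s N := by
  induction N with
  | zero => exact fun h => absurd h (by simpa using nthLinComplexity_le s 0)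
  | succ N ih => exact ih.succ

theorem nthLinComplexity_succ_of_ne (hst : ∀ m < N, s m = t m) (hN : s N ≠ t N) :
    (nthLinComplexity (N + 1) s = nthLinComplexity N s ∧
      nthLinComplexity (N + 1) t = max (nthLinComplexity N s) (N + 1 - nthLinComplexity N s)) ∨
    (nthLinComplexity (N + 1) s = max (nthLinComplexity N s) (N + 1 - nthLinComplexity N s) ∧
      nthLinComplexity (N + 1) t = nthLinComplexity N s) := by
  obtain ⟨a, ha⟩ := exists_generates_nthLinComplexity s N
  have hts : nthLinComplexity N t = nthLinComplexity N s := (nthLinComplexity_congr hst).symm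
  have hat : Generates t N (nthLinComplexity N s) a := ha.congr hst
  have hdiff := recSum_sub_recSum_of_eqOn ha.monic (nthLinComplexity_le s N) hst
  by_cases hds : recSum s a (nthLinComplexity N s) (N - nthLinComplexity N s) = 0
  · have hdt : recSum t a (nthLinComplexity N s) (N - nthLinComplexity N s) ≠ 0 := fun hdt =>
      hN (sub_eq_zero.mp (by rw [← hdiff, hds, hdt, sub_zero]))
    exact .inl ⟨nthLinComplexity_succ_of_recSum_eq_zero ha rfl hds,
      nthLinComplexity_succ_of_recSum_ne_zero (hasPrevGenerator t N) hat hts hdt⟩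
  · have hdt : recSum t a (nthLinComplexity N s) (N - nthLinComplexity N s) = 0 := by
      by_contra hdt
      rw [zmod_two_eq_one_of_ne_zero hds, zmod_two_eq_one_of_ne_zero hdt, sub_self] at hdiff
      exact hN (sub_eq_zero.mp hdiff.symm)
    exact .inr ⟨nthLinComplexity_succ_of_recSum_ne_zero (hasPrevGenerator s N) ha rfl hds,
      nthLinComplexity_succ_of_recSum_eq_zero hat hts hdt⟩

end nthLinComplexity

section count

variable {N : ℕ}

lemma extSeq_snoc_of_lt (w : Fin N → ZMod 2) (b : ZMod 2) {n : ℕ} (hn : n < N) :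
    extSeq (N + 1) (Fin.snoc w b) n = extSeq N w n := by
  rw [extSeq, extSeq, dif_pos (by omega), dif_pos hn]
  exact Fin.snoc_castSucc (i := ⟨n, hn⟩) ..

lemma extSeq_snoc_self (w : Fin N → ZMod 2) (b : ZMod 2) :
    extSeq (N + 1) (Fin.snoc w b) N = b := by
  rw [extSeq, dif_pos N.lt_succ_self]
  exact Fin.snoc_last (n := N) ..

lemma sum_ite_nthLinComplexity_snoc (w : Fin N → ZMod 2) (L : ℕ) :
    ∑ b : ZMod 2,
        (if nthLinComplexity (N + 1) (extSeq (N + 1) (Fin.snoc w b)) = L then 1 else 0) =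
      (if nthLinComplexity N (extSeq N w) = L then 1 else 0) +
        (if max (nthLinComplexity N (extSeq N w)) (N + 1 - nthLinComplexity N (extSeq N w)) = L
          then 1 else 0) := by
  have hK (b : ZMod 2) :
      nthLinComplexity N (extSeq (N + 1) (Fin.snoc w b)) = nthLinComplexity N (extSeq N w) :=
    nthLinComplexity_congr fun n hn => extSeq_snoc_of_lt w b hn
  rw [show (univ : Finset (ZMod 2)) = {0, 1} by decide, sum_pair zero_ne_one]
  rcases nthLinComplexity_succ_of_ne (s := extSeq (N + 1) (Fin.snoc w 0))
      (t := extSeq (N + 1) (Fin.snoc w 1))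
      (fun n hn => by rw [extSeq_snoc_of_lt w 0 hn, extSeq_snoc_of_lt w 1 hn])
      (by rw [extSeq_snoc_self, extSeq_snoc_self]; decide) with ⟨h0, h1⟩ | ⟨h0, h1⟩
  · rw [h0, h1, hK]
  · rw [h0, h1, hK, add_comm]

lemma A_eq_sum (N L : ℕ) :
    A N L = ∑ v : Fin N → ZMod 2, if nthLinComplexity N (extSeq N v) = L then 1 else 0 := by
  rw [A, card_filter]

lemma A_succ (N L : ℕ) :
    A (N + 1) L = A N L + (if N + 1 ≤ 2 * L then A N L else 0) +
      (if N + 2 ≤ 2 * L ∧ L ≤ N + 1 then A N (N + 1 - L) else 0) := by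
  have hsplit (K : ℕ) (hK : K ≤ N) :
      (if max K (N + 1 - K) = L then 1 else 0) =
        (if N + 1 ≤ 2 * L then (if K = L then 1 else 0) else 0) +
          (if N + 2 ≤ 2 * L ∧ L ≤ N + 1 then (if K = N + 1 - L then 1 else 0) else 0) := by
    split_ifs <;> omega
  rw [A_eq_sum, ← (Fin.snocEquiv fun _ => ZMod 2).sum_comp, Fintype.sum_prod_type, sum_comm]
  have hsnoc (b : ZMod 2) (w : Fin N → ZMod 2) :
      Fin.snocEquiv (fun _ => ZMod 2) (b, w) = Fin.snoc w b := rfl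
  simp only [hsnoc, sum_ite_nthLinComplexity_snoc, sum_add_distrib,
    hsplit _ (nthLinComplexity_le _ N), sum_ite_irrel, sum_const_zero, ← A_eq_sum, add_assoc]

lemma A_zero (N : ℕ) : A N 0 = 1 := by
  rw [A, card_eq_one]
  refine ⟨0, ext fun v => ?_⟩
  simp only [mem_filter, mem_univ, true_and, mem_singleton, nthLinComplexity_eq_zero_iff,
    funext_iff, Pi.zero_apply, Fin.forall_iff, extSeq]
  exact forall₂_congr fun n hn => by rw [dif_pos hn]

lemma A_eq_zero_of_lt {N L : ℕ} (h : N < L) : A N L = 0 := by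
  rw [A, card_eq_zero, filter_eq_empty_iff]
  exact fun v _ => (h.trans_le' (nthLinComplexity_le _ N)).ne

lemma A_eq_pow {N L : ℕ} (h1 : 1 ≤ L) (hLN : L ≤ N) :
    A N L = 2 ^ min (2 * L - 1) (2 * N - 2 * L) := by
  induction N generalizing L with
  | zero => omega
  | succ N ih =>
    rw [A_succ]
    rcases Nat.lt_or_ge N (2 * L) with hlt | hle
    · rcases Nat.lt_or_ge N L with hNL | hLN'
      · obtain rfl : L = N + 1 := by omega
        simp [A_eq_zero_of_lt, A_zero, show N + 2 ≤ 2 * (N + 1) by omega]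
      rcases (show 2 * L = N + 1 ∨ N + 2 ≤ 2 * L by omega) with hmid | hhigh
      · rw [if_pos (by omega), if_neg (by omega), ih h1 hLN',
          show min (2 * L - 1) (2 * N - 2 * L) = N - 1 by omega,
          show min (2 * L - 1) (2 * (N + 1) - 2 * L) = N - 1 + 1 by omega]
        ring
      · rw [if_pos (by omega), if_pos (by omega), ih h1 hLN', ih (by omega) (by omega),
          show min (2 * L - 1) (2 * N - 2 * L) = 2 * N - 2 * L by omega,
          show min (2 * (N + 1 - L) - 1) (2 * N - 2 * (N + 1 - L)) = 2 * N - 2 * L + 1 by omega,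
          show min (2 * L - 1) (2 * (N + 1) - 2 * L) = 2 * N - 2 * L + 2 by omega]
        ring
    · rw [if_neg (by omega), if_neg (by omega), add_zero, add_zero, ih h1 (by omega),
        show min (2 * L - 1) (2 * N - 2 * L) = min (2 * L - 1) (2 * (N + 1) - 2 * L) by omega]

lemma sum_A (N : ℕ) : ∑ L ∈ range (N + 1), A N L = 2 ^ N := by
  have hcard := card_eq_sum_card_fiberwise (s := univ) (t := range (N + 1))
    (f := fun v : Fin N → ZMod 2 => nthLinComplexity N (extSeq N v))
    fun v _ => mem_range.mpr (Nat.lt_succ_of_le (nthLinComplexity_le _ N))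
  rw [card_univ, Fintype.card_fun, ZMod.card, Fintype.card_fin] at hcard
  exact hcard.symm

end count

theorem stmt13_general (N : ℕ) :
    (∀ L, 1 ≤ L → L ≤ N → A N L = 2 ^ min (2 * L - 1) (2 * N - 2 * L)) ∧
    A N 0 = 1 ∧
    ∑ L ∈ Finset.range (N + 1), A N L = 2 ^ N :=
  ⟨fun _ h1 hLN => A_eq_pow h1 hLN, A_zero N, sum_A N⟩

theorem stmt13 (N : ℕ) (hN : 1 ≤ N) :
    (∀ L, 1 ≤ L → L ≤ N → A N L = 2 ^ min (2 * L - 1) (2 * N - 2 * L)) ∧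
    A N 0 = 1 ∧
    ∑ L ∈ Finset.range (N + 1), A N L = 2 ^ N :=
  stmt13_general N
end
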